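/- CVaR is subadditive: for integrable random variables X₁, X₂ on a common probability space, CVaR_p(X₁ + X₂) ≤ CVaR_p(X₁) + CVaR_p(X₂). -/

import Mathlib

/-!
Write `c = 1 / (1 - p)`. For every `η₁, η₂` the pointwise bound
`(X₁ + X₂ - (η₁ + η₂))⁺ ≤ (X₁ - η₁)⁺ + (X₂ - η₂)⁺` shows that the objective of `X₁ + X₂` at
`η₁ + η₂` is at most the sum of the objectives of `X₁` at `η₁` and of `X₂` at `η₂`; taking
infima gives the claim. The infimum on the left is a genuine one (not the junk value of an
unbounded `⨅`) because `c ≥ 1` bounds the objective of an integrable `X` below by `𝔼[X]`.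
-/

open MeasureTheory

lemma MeasureTheory.Integrable.max_zero_sub {Ω : Type*} [MeasurableSpace Ω] {μ : Measure Ω}
    [IsFiniteMeasure μ] {X : Ω → ℝ} (hX : Integrable X μ) (η : ℝ) :
    Integrable (fun ω => max 0 (X ω - η)) μ :=
  (hX.sub (integrable_const η)).pos_part.congr (ae_of_all _ fun _ => max_comm _ _)

namespace ProbabilityTheory

variable {Ω : Type*} [MeasurableSpace Ω] {μ : Measure Ω}

/-- The Rockafellar–Uryasev objective; `CVaR_p X` is its infimum over `η` at `c = 1 / (1 - p)`. -/
noncomputable def cvarObjective (μ : Measure Ω) (c : ℝ) (X : Ω → ℝ) (η : ℝ) : ℝ :=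
  η + c * ∫ ω, max 0 (X ω - η) ∂μ

lemma integral_le_cvarObjective [IsProbabilityMeasure μ] {X : Ω → ℝ} (hX : Integrable X μ)
    {c : ℝ} (hc : 1 ≤ c) (η : ℝ) : ∫ ω, X ω ∂μ ≤ cvarObjective μ c X η := by
  have hpos : 0 ≤ ∫ ω, max 0 (X ω - η) ∂μ := integral_nonneg fun ω => le_max_left _ _
  calc ∫ ω, X ω ∂μ = η + ∫ ω, (X ω - η) ∂μ := by
        rw [integral_sub hX (integrable_const η)]; simp
    _ ≤ η + ∫ ω, max 0 (X ω - η) ∂μ :=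
        add_le_add_right (integral_mono (hX.sub (integrable_const η)) (hX.max_zero_sub η)
          fun ω => le_max_right _ _) η
    _ ≤ cvarObjective μ c X η := add_le_add_right (le_mul_of_one_le_left hpos hc) η

lemma bddBelow_range_cvarObjective [IsProbabilityMeasure μ] {X : Ω → ℝ} (hX : Integrable X μ)
    {c : ℝ} (hc : 1 ≤ c) : BddBelow (Set.range (cvarObjective μ c X)) :=
  ⟨∫ ω, X ω ∂μ, Set.forall_mem_range.2 (integral_le_cvarObjective hX hc)⟩

lemma cvarObjective_add_le [IsFiniteMeasure μ] {X₁ X₂ : Ω → ℝ} (hX₁ : Integrable X₁ μ)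
    (hX₂ : Integrable X₂ μ) {c : ℝ} (hc : 0 ≤ c) (η₁ η₂ : ℝ) :
    cvarObjective μ c (X₁ + X₂) (η₁ + η₂) ≤ cvarObjective μ c X₁ η₁ + cvarObjective μ c X₂ η₂ := by
  have hmono : ∫ ω, max 0 ((X₁ + X₂) ω - (η₁ + η₂)) ∂μ ≤
      ∫ ω, max 0 (X₁ ω - η₁) ∂μ + ∫ ω, max 0 (X₂ ω - η₂) ∂μ := by
    rw [← integral_add (hX₁.max_zero_sub η₁) (hX₂.max_zero_sub η₂)]
    refine integral_mono ((hX₁.add hX₂).max_zero_sub _)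
      ((hX₁.max_zero_sub η₁).add (hX₂.max_zero_sub η₂)) fun ω => ?_
    calc max 0 ((X₁ + X₂) ω - (η₁ + η₂)) = max (0 + 0) ((X₁ ω - η₁) + (X₂ ω - η₂)) := by
          rw [add_zero, Pi.add_apply, add_sub_add_comm]
      _ ≤ max 0 (X₁ ω - η₁) + max 0 (X₂ ω - η₂) := max_add_add_le_max_add_max
  unfold cvarObjective
  linarith [mul_le_mul_of_nonneg_left hmono hc]

end ProbabilityTheory

open ProbabilityTheory in
/-- CVaR is subadditive: `CVaR_p(X₁ + X₂) ≤ CVaR_p(X₁) + CVaR_p(X₂)`. -/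
theorem cvar_subadditive {Ω : Type*} [MeasurableSpace Ω]
    (μ : Measure Ω) [IsProbabilityMeasure μ]
    (p : ℝ) (hp : 0 < p) (hp1 : p < 1)
    (X₁ X₂ : Ω → ℝ) (hX₁ : Integrable X₁ μ) (hX₂ : Integrable X₂ μ) :
    (⨅ η : ℝ, η + (1 / (1 - p)) * ∫ ω, max 0 (X₁ ω + X₂ ω - η) ∂μ) ≤
      (⨅ η : ℝ, η + (1 / (1 - p)) * ∫ ω, max 0 (X₁ ω - η) ∂μ) +
        ⨅ η : ℝ, η + (1 / (1 - p)) * ∫ ω, max 0 (X₂ ω - η) ∂μ := by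
  have hc : 1 ≤ 1 / (1 - p) := by
    rw [le_div_iff₀ (by linarith)]; linarith
  change ⨅ η, cvarObjective μ (1 / (1 - p)) (X₁ + X₂) η ≤
    (⨅ η, cvarObjective μ (1 / (1 - p)) X₁ η) + ⨅ η, cvarObjective μ (1 / (1 - p)) X₂ η
  exact le_ciInf_add_ciInf fun η₁ η₂ =>
    (ciInf_le (bddBelow_range_cvarObjective (hX₁.add hX₂) hc) (η₁ + η₂)).trans
      (cvarObjective_add_le hX₁ hX₂ (zero_le_one.trans hc) η₁ η₂)
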